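/- arXiv:2605.22640 — 2 statements merged into one kernel-verified Lean document; each statement's English description precedes it below -/
import Mathlib

section
/- Let p be a product probability measure on ℝ^m with independent coordinates having marginals π_1, …, π_m, and let p⁺ be the truncation of p onto a measurable set A with c = p(A) > 0. Let π⁺_i be the i-th marginal of p⁺. Then the sum over i of KL(π⁺_i || π_i) is at most −log c. -/
open MeasureTheory
open scoped ENNReal

/-! With `f i = dπ⁺ᵢ/dπᵢ` and `G x = ∏ i, f i (x i)`, the sum of the divergences is `∫ log G dp⁺`.
Since `p⁺ ≤ c⁻¹ • p`, integrating Gibbs' inequality `log (c G) ≤ c G - 1` against `p⁺` gives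
`∫ log G dp⁺ + log c ≤ ∫ G dp - 1`, and `∫ G dp = ∏ i, ∫ f i dπᵢ = 1` by Fubini. -/

namespace MeasureTheory

open Real

section General

variable {α : Type*} [MeasurableSpace α] {μ ν : Measure α}

lemma Measure.rnDeriv_le_of_le_smul [SigmaFinite ν] {k : ℝ≥0∞} (h : μ ≤ k • ν) :
    μ.rnDeriv ν ≤ᵐ[ν] fun _ => k := by
  refine ae_le_of_forall_setLIntegral_le_of_sigmaFinite (Measure.measurable_rnDeriv _ _)
    fun s _ _ => ?_
  calc ∫⁻ x in s, μ.rnDeriv ν x ∂ν ≤ μ s := Measure.setLIntegral_rnDeriv_le s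
    _ ≤ k * ν s := h s
    _ = ∫⁻ _ in s, k ∂ν := by simp

lemma Measure.map_le_smul_map {β : Type*} [MeasurableSpace β] {k : ℝ≥0∞} (h : μ ≤ k • ν)
    {f : α → β} (hf : Measurable f) : μ.map f ≤ k • ν.map f :=
  Measure.map_smul k ν f ▸ Measure.map_mono h hf

lemma integrable_llr_of_le_smul [IsFiniteMeasure μ] [IsFiniteMeasure ν] {k : ℝ≥0∞} (hk : k ≠ ∞)
    (h : μ ≤ k • ν) : Integrable (llr μ ν) μ := by
  rw [← integrable_rnDeriv_mul_log_iff (Measure.absolutelyContinuous_of_le_smul h)]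
  obtain ⟨C, hC⟩ := (isCompact_Icc (a := 0) (b := k.toReal)).exists_bound_of_continuousOn
    continuous_mul_log.continuousOn
  refine Integrable.of_bound (by fun_prop) C ?_
  filter_upwards [Measure.rnDeriv_le_of_le_smul h] with x hx
  exact hC _ ⟨ENNReal.toReal_nonneg, ENNReal.toReal_mono hk hx⟩

lemma ae_toReal_rnDeriv_map_pos {β : Type*} [MeasurableSpace β] [IsFiniteMeasure μ]
    {ρ : Measure β} [SigmaFinite ρ] {f : α → β} (hf : Measurable f) (hac : μ.map f ≪ ρ) :
    ∀ᵐ x ∂μ, 0 < ((μ.map f).rnDeriv ρ (f x)).toReal := by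
  refine ae_of_ae_map (p := fun y => 0 < ((μ.map f).rnDeriv ρ y).toReal) hf.aemeasurable ?_
  filter_upwards [Measure.rnDeriv_pos hac, hac.ae_le (Measure.rnDeriv_lt_top (μ.map f) ρ)]
    with y h_pos h_lt_top
  exact ENNReal.toReal_pos h_pos.ne' h_lt_top.ne

lemma integral_log_le_of_le_inv_smul [IsProbabilityMeasure μ] {c : ℝ} (hc : 0 < c)
    (h : μ ≤ (ENNReal.ofReal c)⁻¹ • ν) {g : α → ℝ} (hg_nonneg : 0 ≤ᵐ[ν] g)
    (hg_pos : ∀ᵐ x ∂μ, 0 < g x) (hg : Integrable g ν)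
    (hlog : Integrable (fun x => log (g x)) μ) :
    ∫ x, log (g x) ∂μ ≤ ∫ x, g x ∂ν - 1 - log c := by
  have hgk : Integrable g ((ENNReal.ofReal c)⁻¹ • ν) := hg.smul_measure (by simp [hc])
  have hgμ : Integrable g μ := hgk.mono_measure h
  have hpoint : ∀ᵐ x ∂μ, log (g x) + log c ≤ c * g x - 1 := by
    filter_upwards [hg_pos] with x hx
    rw [← log_mul hx.ne' hc.ne', mul_comm]
    exact log_le_sub_one_of_pos (by positivity)
  have hmass : c * ∫ x, g x ∂μ ≤ ∫ x, g x ∂ν :=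
    calc c * ∫ x, g x ∂μ ≤ c * ∫ x, g x ∂((ENNReal.ofReal c)⁻¹ • ν) :=
          mul_le_mul_of_nonneg_left
            (integral_mono_measure h (Measure.smul_absolutelyContinuous.ae_le hg_nonneg) hgk) hc.le
      _ = ∫ x, g x ∂ν := by simp [integral_smul_measure, hc.le, hc.ne']
  have hint : ∫ x, (log (g x) + log c) ∂μ ≤ ∫ x, (c * g x - 1) ∂μ :=
    integral_mono_ae (hlog.add (integrable_const _)) ((hgμ.const_mul c).sub (integrable_const 1))
      hpoint
  rw [integral_add hlog (integrable_const _), integral_sub (hgμ.const_mul c) (integrable_const 1),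
    integral_const_mul] at hint
  simp only [integral_const, probReal_univ, smul_eq_mul, one_mul] at hint
  linarith

end General

section Pi

variable {ι E : Type*} [Fintype ι] [MeasurableSpace E] {μ : Measure (ι → E)} {ν : ι → Measure E}

lemma integral_sum_comp_eval {f : ι → E → ℝ} (hf : ∀ i, Integrable (f i) (μ.map fun x => x i)) :
    ∫ x, ∑ i, f i (x i) ∂μ = ∑ i, ∫ y, f i y ∂(μ.map fun x => x i) := by
  refine (integral_finsetSum _ fun i _ =>
    (hf i).comp_measurable (measurable_pi_apply i)).trans ?_
  exact Finset.sum_congr rfl fun i _ =>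
    (integral_map (measurable_pi_apply i).aemeasurable (hf i).aestronglyMeasurable).symm

lemma integral_prod_toReal_rnDeriv_map_eval [IsProbabilityMeasure μ] [∀ i, SigmaFinite (ν i)]
    (hac : ∀ i, μ.map (fun x => x i) ≪ ν i) :
    ∫ x, ∏ i, ((μ.map fun x => x i).rnDeriv (ν i) (x i)).toReal ∂Measure.pi ν = 1 := by
  have (i : ι) : IsProbabilityMeasure (μ.map fun x => x i) :=
    Measure.isProbabilityMeasure_map (measurable_pi_apply i).aemeasurable
  rw [integral_fintype_prod_eq_prod (fun i y => ((μ.map fun x => x i).rnDeriv (ν i) y).toReal)]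
  simp only [Measure.integral_toReal_rnDeriv (hac _), probReal_univ, Finset.prod_const_one]

theorem sum_integral_llr_map_eval_le [IsProbabilityMeasure μ] [∀ i, IsProbabilityMeasure (ν i)]
    {c : ℝ} (hc : 0 < c) (h : μ ≤ (ENNReal.ofReal c)⁻¹ • Measure.pi ν) :
    ∑ i, ∫ x, llr (μ.map fun x => x i) (ν i) x ∂(μ.map fun x => x i) ≤ -log c := by
  have hmarg (i : ι) : μ.map (fun x => x i) ≤ (ENNReal.ofReal c)⁻¹ • ν i :=
    (measurePreserving_eval ν i).map_eq ▸ Measure.map_le_smul_map h (measurable_pi_apply i)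
  have (i : ι) : IsProbabilityMeasure (μ.map fun x => x i) :=
    Measure.isProbabilityMeasure_map (measurable_pi_apply i).aemeasurable
  have hac (i : ι) := Measure.absolutelyContinuous_of_le_smul (hmarg i)
  have hllr (i : ι) := integrable_llr_of_le_smul (by simp [hc]) (hmarg i)
  have hpos : ∀ᵐ x ∂μ, ∀ i, 0 < ((μ.map fun x => x i).rnDeriv (ν i) (x i)).toReal :=
    ae_all_iff.2 fun i => ae_toReal_rnDeriv_map_pos (measurable_pi_apply i) (hac i)
  have hlog : (fun x => log (∏ i, ((μ.map fun x => x i).rnDeriv (ν i) (x i)).toReal)) =ᵐ[μ]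
      fun x => ∑ i, llr (μ.map fun x => x i) (ν i) (x i) :=
    hpos.mono fun x hx => log_prod fun i _ => (hx i).ne'
  have hlog_int : Integrable (fun x => ∑ i, llr (μ.map fun x => x i) (ν i) (x i)) μ :=
    integrable_finsetSum _ fun i _ => (hllr i).comp_measurable (measurable_pi_apply i)
  rw [← integral_sum_comp_eval hllr, ← integral_congr_ae hlog]
  refine (integral_log_le_of_le_inv_smul hc h
    (ae_of_all _ fun x => Finset.prod_nonneg fun i _ => ENNReal.toReal_nonneg)
    (hpos.mono fun x hx => Finset.prod_pos fun i _ => hx i)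
    (Integrable.fintype_prod fun i => Measure.integrable_toReal_rnDeriv)
    ((integrable_congr hlog).2 hlog_int)).trans_eq ?_
  rw [integral_prod_toReal_rnDeriv_map_eval hac]
  ring

end Pi

end MeasureTheory

theorem stmt_5_general (m : ℕ) (π : Fin m → Measure ℝ) [∀ i, IsProbabilityMeasure (π i)]
    (A : Set (Fin m → ℝ))
    (c : ℝ) (hc : ENNReal.ofReal c = Measure.pi π A) (hcpos : 0 < c)
    (pplus : Measure (Fin m → ℝ))
    (hpplus : pplus = (ENNReal.ofReal c)⁻¹ • (Measure.pi π).restrict A)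
    (πplus : Fin m → Measure ℝ)
    (hπplus : ∀ i, πplus i = pplus.map (fun x => x i)) :
    ∑ i, ∫ x, Real.log (((πplus i).rnDeriv (π i) x).toReal) ∂(πplus i) ≤
      - Real.log c := by
  obtain rfl : πplus = fun i => pplus.map (fun x => x i) := funext hπplus
  have : IsProbabilityMeasure pplus := by
    rw [hpplus, hc]
    exact ProbabilityTheory.cond_isProbabilityMeasure (hc ▸ (ENNReal.ofReal_pos.2 hcpos).ne')
  refine sum_integral_llr_map_eval_le hcpos ?_
  rw [hpplus]
  exact fun s => mul_le_mul_right (Measure.restrict_le_self s) _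

/-- Let `p = ⨂ᵢ π_i` be a product probability measure on `ℝ^m` with independent
coordinates, and let `p⁺` be its truncation onto a measurable set `A` with
`c = p A > 0`. Let `π⁺_i` be the `i`-th marginal of `p⁺`. Then
`Σ_i KL(π⁺_i || π_i) ≤ - log c`. -/
theorem stmt_5 (m : ℕ) (π : Fin m → Measure ℝ) [∀ i, IsProbabilityMeasure (π i)]
    (A : Set (Fin m → ℝ)) (hA : MeasurableSet A)
    (c : ℝ) (hc : ENNReal.ofReal c = Measure.pi π A) (hcpos : 0 < c)
    (pplus : Measure (Fin m → ℝ))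
    (hpplus : pplus = (ENNReal.ofReal c)⁻¹ • (Measure.pi π).restrict A)
    (πplus : Fin m → Measure ℝ)
    (hπplus : ∀ i, πplus i = pplus.map (fun x => x i)) :
    ∑ i, ∫ x, Real.log (((πplus i).rnDeriv (π i) x).toReal) ∂(πplus i) ≤
      - Real.log c :=
  stmt_5_general m π A c hc hcpos pplus hpplus πplus hπplus
end

section
/- Fix a binary symmetric sparsity pattern z with zero diagonal. Let Θ have independent entries with off-diagonal θ_ij = 0 when z_ij = 0 and θ_ij ~ N(0,σ²) when z_ij = 1, and diagonal independent of the off-diagonals. With m_z = Σ_{i<j} z_ij, θ_min = min_i θ_ii, θ_max = max_i θ_ii: E[(2Φ(θ_min/((k−1)σ)) − 1)^{m_z}] ≤ P(Θ ≻ 0 | Z = z) ≤ E[(2Φ(θ_max/σ) − 1)^{m_z}]. -/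
/-!
Given the diagonal `d`, the stochastic off-diagonal entries are independent `N(0, σ²)`, so the
event that all `m_z` of them satisfy `|θ_ij| < t` has probability `(2Φ(t/σ) − 1)^{m_z}`.
Positive definiteness is sandwiched between two such events. For `t = θ_min/(k−1)` every
off-diagonal row sum is below `θ_min`, so the matrix is strictly diagonally dominant and hence
positive definite by Gershgorin's theorem. Conversely, the `2 × 2` principal minors of a positive
definite matrix give `θ_ij² < θ_ii θ_jj ≤ θ_max²`. Integrating over `d` gives the two bounds.
-/

open MeasureTheory ProbabilityTheory
open scoped ENNReal

/-- Standard normal cumulative distribution function `Φ`. -/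
noncomputable def stdGaussCDF (x : ℝ) : ℝ := ((gaussianReal 0 1) (Set.Iic x)).toReal

/-- Build a symmetric matrix with sparsity pattern `z` from a vector of diagonal
entries `d` and a vector `w` of upper-triangular entries: entries with `z i j`
false are zero. -/
def sparseSymMatrixOf {k : ℕ} (z : Fin k → Fin k → Bool) (d : Fin k → ℝ)
    (w : {p : Fin k × Fin k // p.1 < p.2} → ℝ) : Matrix (Fin k) (Fin k) ℝ :=
  Matrix.of fun i j =>
    if h : i < j then (if z i j then w ⟨(i, j), h⟩ else 0)
    else if h' : j < i then (if z j i then w ⟨(j, i), h'⟩ else 0) else d i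

open Matrix Finset
open scoped NNReal

lemma stdGaussCDF_eq_cdf : stdGaussCDF = cdf (gaussianReal 0 1) := by
  ext x
  rw [stdGaussCDF, cdf_eq_real, measureReal_def]

@[fun_prop]
lemma measurable_stdGaussCDF : Measurable stdGaussCDF :=
  stdGaussCDF_eq_cdf ▸ (cdf _).mono.measurable

lemma nullSingletonClass_gaussianReal (m : ℝ) {v : ℝ≥0} (hv : v ≠ 0) :
    NullSingletonClass (gaussianReal m v) :=
  ⟨fun x => gaussianReal_absolutelyContinuous m hv (Real.volume_singleton (a := x))⟩

lemma measureReal_Icc_neg_self_of_map_neg_eq {μ : Measure ℝ} [IsProbabilityMeasure μ]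
    (hμ : μ.map (fun x => -x) = μ) {a : ℝ} (ha : 0 ≤ a) :
    μ.real (Set.Icc (-a) a) = 2 * μ.real (Set.Iic a) - 1 := by
  have hIio : μ.real (Set.Iio (-a)) = μ.real (Set.Ioi a) := by
    conv_lhs => rw [← hμ]
    rw [map_measureReal_apply measurable_neg measurableSet_Iio]
    congr 1
    ext x
    simp
  have hIcc : Set.Icc (-a) a = Set.Iic a \ Set.Iio (-a) := by
    ext x
    simp [and_comm]
  rw [hIcc, measureReal_sdiff (Set.Iio_subset_Iic_self.trans (Set.Iic_subset_Iic.2 (by linarith)))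
    measurableSet_Iio, hIio, ← Set.compl_Iic, probReal_compl_eq_one_sub measurableSet_Iic]
  ring

lemma two_mul_stdGaussCDF_sub_one_nonneg {x : ℝ} (hx : 0 ≤ x) : 0 ≤ 2 * stdGaussCDF x - 1 := by
  rw [stdGaussCDF, ← measureReal_def, ← measureReal_Icc_neg_self_of_map_neg_eq
    (by simpa using gaussianReal_map_neg (μ := 0) (v := 1)) hx]
  exact measureReal_nonneg

lemma abs_two_mul_stdGaussCDF_sub_one_le (x : ℝ) : |2 * stdGaussCDF x - 1| ≤ 1 := by
  have h0 : 0 ≤ stdGaussCDF x := stdGaussCDF_eq_cdf ▸ cdf_nonneg _ x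
  have h1 : stdGaussCDF x ≤ 1 := stdGaussCDF_eq_cdf ▸ cdf_le_one _ x
  rw [abs_le]
  constructor <;> linarith

lemma gaussianReal_real_Iic {σ : ℝ} (hσ : 0 < σ) (t : ℝ) :
    (gaussianReal 0 ⟨σ ^ 2, sq_nonneg σ⟩).real (Set.Iic t) = stdGaussCDF (t / σ) := by
  have hmap : (gaussianReal 0 1).map (σ * ·) = gaussianReal 0 ⟨σ ^ 2, sq_nonneg σ⟩ := by
    have h := gaussianReal_map_const_mul (μ := 0) (v := 1) σ
    simp only [mul_zero, mul_one] at h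
    exact h
  rw [← hmap, map_measureReal_apply (measurable_const_mul σ) measurableSet_Iic,
    Set.preimage_const_mul_Iic₀ _ hσ, stdGaussCDF, measureReal_def]

lemma gaussianReal_Ioo_neg_self {σ : ℝ} (hσ : 0 < σ) {t : ℝ} (ht : 0 ≤ t) :
    gaussianReal 0 ⟨σ ^ 2, sq_nonneg σ⟩ (Set.Ioo (-t) t)
      = ENNReal.ofReal (2 * stdGaussCDF (t / σ) - 1) := by
  have hv : (⟨σ ^ 2, sq_nonneg σ⟩ : ℝ≥0) ≠ 0 := fun h =>
    (pow_pos hσ 2).ne' (congrArg NNReal.toReal h)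
  have := nullSingletonClass_gaussianReal 0 hv
  -- instance search does not see through the anonymous constructor `⟨σ ^ 2, _⟩`
  have := instIsProbabilityMeasureGaussianReal 0 ⟨σ ^ 2, sq_nonneg σ⟩
  rw [measure_congr Ioo_ae_eq_Icc, ← ofReal_measureReal,
    measureReal_Icc_neg_self_of_map_neg_eq (by simpa using gaussianReal_map_neg (μ := 0)) ht,
    gaussianReal_real_Iic hσ]

lemma MeasureTheory.Measure.pi_setOf_forall_mem {ι α : Type*} [Fintype ι] [MeasurableSpace α]
    (μ : Measure α) [IsProbabilityMeasure μ] (P : ι → Prop) [DecidablePred P] (s : Set α) :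
    Measure.pi (fun _ : ι => μ) {w | ∀ i, P i → w i ∈ s} = μ s ^ #{i | P i} := by
  have hpi : {w : ι → α | ∀ i, P i → w i ∈ s} = Set.univ.pi fun i => if P i then s else .univ := by
    ext w
    refine forall_congr' fun i => ?_
    by_cases h : P i <;> simp [h]
  simp_rw [hpi, Measure.pi_pi, apply_ite μ, measure_univ]
  rw [prod_ite, prod_const, prod_const_one, mul_one]

lemma card_filter_subtype_eq {α : Type*} [Fintype α] (Q R : α → Prop) [DecidablePred Q]
    [DecidablePred R] : #{x : Subtype Q | R x} = #{x | Q x ∧ R x} := by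
  rw [← Fintype.card_subtype, ← Fintype.card_subtype]
  exact Fintype.card_congr (Equiv.subtypeSubtypeEquivSubtypeInter Q R)

lemma prod_pi_gaussianReal_setOf_abs_lt {α ι : Type*} [MeasurableSpace α] [Fintype ι]
    {μ : Measure α} [IsFiniteMeasure μ] {σ : ℝ} (hσ : 0 < σ) (P : ι → Prop) [DecidablePred P]
    {f : α → ℝ} (hf : Measurable f) (hf₀ : ∀ᵐ a ∂μ, 0 ≤ f a) :
    (μ.prod (Measure.pi fun _ : ι => gaussianReal 0 ⟨σ ^ 2, sq_nonneg σ⟩))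
        {x | ∀ i, P i → |x.2 i| < f x.1}
      = ENNReal.ofReal (∫ a, (2 * stdGaussCDF (f a / σ) - 1) ^ #{i | P i} ∂μ) := by
  have := instIsProbabilityMeasureGaussianReal 0 ⟨σ ^ 2, sq_nonneg σ⟩
  have hmeas : MeasurableSet {x : α × (ι → ℝ) | ∀ i, P i → |x.2 i| < f x.1} :=
    measurableSet_setOfPred.2 <| Measurable.forall fun i => measurable_const.imp <|
      measurableSet_setOfPred.1 <| measurableSet_lt (by fun_prop) (hf.comp measurable_fst)
  have hint : Integrable (fun a => (2 * stdGaussCDF (f a / σ) - 1) ^ #{i | P i}) μ := by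
    refine .of_bound (by fun_prop : Measurable _).aestronglyMeasurable 1 (.of_forall fun a => ?_)
    rw [Real.norm_eq_abs, abs_pow]
    exact pow_le_one₀ (abs_nonneg _) (abs_two_mul_stdGaussCDF_sub_one_le _)
  have hnonneg : ∀ᵐ a ∂μ, 0 ≤ 2 * stdGaussCDF (f a / σ) - 1 := by
    filter_upwards [hf₀] with a ha
    exact two_mul_stdGaussCDF_sub_one_nonneg (div_nonneg ha hσ.le)
  rw [Measure.prod_apply hmeas, ofReal_integral_eq_lintegral_ofReal hint
    (hnonneg.mono fun a ha => pow_nonneg ha _)]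
  refine lintegral_congr_ae ?_
  filter_upwards [hf₀, hnonneg] with a ha ha'
  have hslice : Prod.mk a ⁻¹' {x : α × (ι → ℝ) | ∀ i, P i → |x.2 i| < f x.1}
      = {w | ∀ i, P i → w i ∈ Set.Ioo (-f a) (f a)} := by
    ext w
    simp [abs_lt]
  rw [hslice, Measure.pi_setOf_forall_mem, gaussianReal_Ioo_neg_self hσ ha, ENNReal.ofReal_pow ha']

lemma Matrix.IsHermitian.posDef_of_sum_abs_lt_diag {n : Type*} [Fintype n] [DecidableEq n]
    {A : Matrix n n ℝ} (hA : A.IsHermitian)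
    (h : ∀ i, ∑ j ∈ univ.erase i, |A i j| < A i i) : A.PosDef := by
  refine hA.posDef_iff_eigenvalues_pos.2 fun i => ?_
  have hμ : Module.End.HasEigenvalue A.toLin' (hA.eigenvalues i) := by
    rw [Module.End.hasEigenvalue_iff_mem_spectrum, spectrum_toLin']
    exact hA.eigenvalues_mem_spectrum_real i
  obtain ⟨k, hk⟩ := eigenvalue_mem_ball hμ
  rw [Metric.mem_closedBall, Real.dist_eq] at hk
  simp only [Real.norm_eq_abs] at hk
  linarith [h k, neg_abs_le (hA.eigenvalues i - A k k)]

lemma Matrix.PosDef.sq_apply_lt_mul_diag {n : Type*} {A : Matrix n n ℝ} (hA : A.PosDef)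
    {i j : n} (hij : i ≠ j) : A i j ^ 2 < A i i * A j j := by
  have hdet := (hA.submatrix (injective_pair_iff_ne.2 hij)).det_pos
  have hsymm : A j i = A i j := by simpa using congrFun (congrFun hA.isHermitian i) j
  rw [det_fin_two] at hdet
  simp only [submatrix_apply, Matrix.cons_val_zero, Matrix.cons_val_one, hsymm] at hdet
  nlinarith

section sparseSymMatrixOf

variable {k : ℕ} {z : Fin k → Fin k → Bool} {d : Fin k → ℝ}
  {w : {p : Fin k × Fin k // p.1 < p.2} → ℝ}

lemma sparseSymMatrixOf_apply_self (i : Fin k) : sparseSymMatrixOf z d w i i = d i := by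
  simp [sparseSymMatrixOf]

lemma sparseSymMatrixOf_apply_of_lt {i j : Fin k} (h : i < j) :
    sparseSymMatrixOf z d w i j = if z i j then w ⟨(i, j), h⟩ else 0 := by
  simp [sparseSymMatrixOf, h]

lemma sparseSymMatrixOf_apply_comm (i j : Fin k) :
    sparseSymMatrixOf z d w j i = sparseSymMatrixOf z d w i j := by
  rcases lt_trichotomy i j with h | rfl | h
  · simp [sparseSymMatrixOf, h, h.not_gt]
  · rfl
  · simp [sparseSymMatrixOf, h, h.not_gt]

lemma isHermitian_sparseSymMatrixOf : (sparseSymMatrixOf z d w).IsHermitian :=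
  IsHermitian.ext fun i j => by rw [star_trivial, sparseSymMatrixOf_apply_comm]

lemma abs_sparseSymMatrixOf_apply_lt {t : ℝ} (ht : 0 < t)
    (hw : ∀ p, z p.1.1 p.1.2 = true → |w p| < t) {i j : Fin k} (hij : i ≠ j) :
    |sparseSymMatrixOf z d w i j| < t := by
  wlog h : i < j generalizing i j
  · rw [← sparseSymMatrixOf_apply_comm]
    exact this hij.symm (lt_of_le_of_ne (not_lt.1 h) hij.symm)
  rw [sparseSymMatrixOf_apply_of_lt h]
  split_ifs with hz
  · exact hw _ hz
  · simpa using ht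

lemma posDef_sparseSymMatrixOf (hk : 2 ≤ k) {t : ℝ} (ht : 0 < t)
    (hw : ∀ p, z p.1.1 p.1.2 = true → |w p| < t) (hd : ∀ i, (k - 1 : ℝ) * t ≤ d i) :
    (sparseSymMatrixOf z d w).PosDef := by
  refine isHermitian_sparseSymMatrixOf.posDef_of_sum_abs_lt_diag fun i => ?_
  have hne : (univ.erase i).Nonempty := by
    rw [← card_pos, card_erase_of_mem (mem_univ i), card_univ, Fintype.card_fin]
    omega
  calc ∑ j ∈ univ.erase i, |sparseSymMatrixOf z d w i j|
      < ∑ _j ∈ univ.erase i, t :=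
        sum_lt_sum_of_nonempty hne fun j hj =>
          abs_sparseSymMatrixOf_apply_lt ht hw (ne_of_mem_erase hj).symm
    _ = (k - 1 : ℝ) * t := by
        rw [sum_const, card_erase_of_mem (mem_univ i), card_univ, Fintype.card_fin, nsmul_eq_mul,
          Nat.cast_pred (by omega)]
    _ ≤ sparseSymMatrixOf z d w i i := (hd i).trans_eq (sparseSymMatrixOf_apply_self i).symm

lemma abs_lt_iSup_of_posDef_sparseSymMatrixOf (hM : (sparseSymMatrixOf z d w).PosDef)
    (p : {p : Fin k × Fin k // p.1 < p.2}) (hp : z p.1.1 p.1.2 = true) : |w p| < ⨆ i, d i := by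
  obtain ⟨⟨i, j⟩, hij⟩ := p
  have hsq := hM.sq_apply_lt_mul_diag hij.ne
  have hdi := hM.diag_pos (i := i)
  have hdj := hM.diag_pos (i := j)
  simp only [sparseSymMatrixOf_apply_self, sparseSymMatrixOf_apply_of_lt hij, hp,
    if_true] at hsq hdi hdj
  have hi : d i ≤ ⨆ i, d i := le_ciSup (Finite.bddAbove_range d) i
  have hj : d j ≤ ⨆ i, d i := le_ciSup (Finite.bddAbove_range d) j
  exact abs_lt_of_sq_lt_sq (hsq.trans_le (mul_le_mul hi hj hdj.le (hdi.le.trans hi)) |>.trans_eq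
    (sq _).symm) (hdi.le.trans hi)

end sparseSymMatrixOf

theorem stmt_14_general (k : ℕ) (hk : 2 ≤ k) (σ : ℝ) (hσ : 0 < σ)
    (z : Fin k → Fin k → Bool)
    (μD : Measure (Fin k → ℝ)) [IsProbabilityMeasure μD]
    (hpos : ∀ᵐ d ∂μD, ∀ i, 0 < d i)
    (μW : Measure ({p : Fin k × Fin k // p.1 < p.2} → ℝ))
    (hμW : μW = Measure.pi (fun _ => gaussianReal 0 ⟨σ ^ 2, sq_nonneg σ⟩))
    (mz : ℕ)
    (hmz : mz = (Finset.univ.filter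
      (fun p : Fin k × Fin k => p.1 < p.2 ∧ z p.1 p.2 = true)).card) :
    ENNReal.ofReal
        (∫ d, (2 * stdGaussCDF ((⨅ i, d i) / ((k - 1) * σ)) - 1) ^ mz ∂μD) ≤
      (μD.prod μW) {x | (sparseSymMatrixOf z x.1 x.2).PosDef} ∧
    (μD.prod μW) {x | (sparseSymMatrixOf z x.1 x.2).PosDef} ≤
      ENNReal.ofReal (∫ d, (2 * stdGaussCDF ((⨆ i, d i) / σ) - 1) ^ mz ∂μD) := by
  have : Nonempty (Fin k) := ⟨⟨0, by omega⟩⟩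
  have hk₁ : (0 : ℝ) < k - 1 := by
    rw [sub_pos, Nat.one_lt_cast]
    omega
  subst hμW hmz
  rw [← card_filter_subtype_eq (fun p : Fin k × Fin k => p.1 < p.2)]
  constructor
  · simp_rw [mul_comm _ σ, ← div_div, div_right_comm _ σ]
    rw [← prod_pi_gaussianReal_setOf_abs_lt hσ _ (f := fun d => (⨅ i, d i) / (k - 1)) (by fun_prop)
      (hpos.mono fun d hd => div_nonneg (le_ciInf fun i => (hd i).le) hk₁.le)]
    refine measure_mono_ae ?_
    filter_upwards [Measure.quasiMeasurePreserving_fst.ae hpos] with x hx hw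
    obtain ⟨i₀, hi₀⟩ := exists_eq_ciInf_of_finite (f := x.1)
    refine posDef_sparseSymMatrixOf hk (div_pos (hi₀ ▸ hx i₀) hk₁) hw fun i => ?_
    rw [mul_div_cancel₀ _ hk₁.ne']
    exact ciInf_le (Finite.bddBelow_range _) i
  · rw [← prod_pi_gaussianReal_setOf_abs_lt hσ _ (f := fun d => ⨆ i, d i) (by fun_prop)
      (hpos.mono fun d hd =>
        (hd (Classical.arbitrary _)).le.trans (le_ciSup (Finite.bddAbove_range d) _))]
    exact measure_mono fun x hx => abs_lt_iSup_of_posDef_sparseSymMatrixOf hx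

/-- For a fixed sparsity pattern `z` (binary, symmetric, zero diagonal), a random
symmetric matrix with independent entries, off-diagonal `θ_ij = 0` when `z_ij = 0`
and `θ_ij ~ N(0, σ²)` when `z_ij = 1`, independent of the diagonal, satisfies,
with `m_z = Σ_{i<j} z_ij`, `θ_min = min_i θ_ii` and `θ_max = max_i θ_ii`:
`E[(2Φ(θ_min/((k−1)σ)) − 1)^{m_z}] ≤ P(Θ ≻ 0 | Z = z) ≤ E[(2Φ(θ_max/σ) − 1)^{m_z}]`. -/
theorem stmt_14 (k : ℕ) (hk : 2 ≤ k) (σ : ℝ) (hσ : 0 < σ)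
    (z : Fin k → Fin k → Bool) (hzsym : ∀ i j, z i j = z j i) (hzdiag : ∀ i, z i i = false)
    (μD : Measure (Fin k → ℝ)) [IsProbabilityMeasure μD]
    (hpos : ∀ᵐ d ∂μD, ∀ i, 0 < d i)
    (μW : Measure ({p : Fin k × Fin k // p.1 < p.2} → ℝ))
    (hμW : μW = Measure.pi (fun _ => gaussianReal 0 ⟨σ ^ 2, sq_nonneg σ⟩))
    (mz : ℕ)
    (hmz : mz = (Finset.univ.filter
      (fun p : Fin k × Fin k => p.1 < p.2 ∧ z p.1 p.2 = true)).card) :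
    ENNReal.ofReal
        (∫ d, (2 * stdGaussCDF ((⨅ i, d i) / ((k - 1) * σ)) - 1) ^ mz ∂μD) ≤
      (μD.prod μW) {x | (sparseSymMatrixOf z x.1 x.2).PosDef} ∧
    (μD.prod μW) {x | (sparseSymMatrixOf z x.1 x.2).PosDef} ≤
      ENNReal.ofReal (∫ d, (2 * stdGaussCDF ((⨆ i, d i) / σ) - 1) ^ mz ∂μD) :=
  stmt_14_general k hk σ hσ z μD hpos μW hμW mz hmz
end
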